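/- Let T be a transition kernel on finite S = ∏ᵢ Xᵢ such that every variable i ∈ {1,...,n} is passive with respect to some Φᵢ ⊆ {1,...,n}\{i}, and suppose the directed graph with edges j → i for j ∈ Φᵢ is acyclic. Then no variable ever changes: for all s,s' with T(s,s') > 0, s = s'. Hence T is supported on the diagonal. -/
import Mathlib


open Finset

/-- If every variable is passive with respect to some witness set `Φᵢ`
not containing itself, and the witness-dependency graph (edges `j → i` for `j ∈ Φᵢ`)
is acyclic, then no variable ever changes: `T` is supported on the diagonal. -/
theorem stmt11 {n : ℕ} (X : Fin n → Type)
    [∀ i, Fintype (X i)] [∀ i, DecidableEq (X i)] [∀ i, Nonempty (X i)]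
    (T : (∀ j, X j) → (∀ j, X j) → ℝ)
    (hT0 : ∀ s s', 0 ≤ T s s') (hT1 : ∀ s, ∑ s', T s s' = 1)
    (Φ : Fin n → Finset (Fin n)) (hΦself : ∀ i, i ∉ Φ i)
    (hpass : ∀ i, ∀ s s', 0 < T s s' → (∀ j ∈ Φ i, s j = s' j) → s i = s' i)
    (hacyc : ∀ i, ¬ Relation.TransGen (fun j i' => j ∈ Φ i') i i) :
    ∀ s s', 0 < T s s' → s = s' := by
  intro s s' hpos
  funext i
  have hwf : WellFounded (fun j i' : Fin n => j ∈ Φ i') := by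
    apply Subrelation.wf (r := Relation.TransGen (fun j i' : Fin n => j ∈ Φ i'))
    · exact fun h => Relation.TransGen.single h
    · have : IsIrrefl (Fin n) (Relation.TransGen (fun j i' : Fin n => j ∈ Φ i')) :=
        ⟨fun a h => hacyc a h⟩
      exact Finite.wellFounded_of_trans_of_irrefl _
  induction i using hwf.induction with
  | _ i ih => exact hpass i s s' hpos (fun j hj => ih j hj)
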